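/- Let M be a real m×n matrix, B ∈ ℝ^m a target coefficient vector, and let the column index set {1,…,n} be partitioned into K pairwise disjoint blocks S_1,…,S_K whose union is all of {1,…,n}. Suppose α*, α ∈ ℝ^n are vectors such that ‖M·α* − B‖₁ ≤ ε₁ (the error of the approximate solution of the global linear system) and for each i ∈ {1,…,K} one has Σ_{j ∈ S_i} |α_j − α*_j| ≤ ε₂^i (the error of the i-th localized mixed equation system). Then the total compilation error satisfies ‖M·α − B‖₁ ≤ ‖M‖₁ · (Σ_{i=1}^{K} ε₂^i) + ε₁, where ‖M‖₁ denotes the operator norm of M induced by the L1 vector norm (the maximum absolute column sum of M). -/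

import Mathlib

/-! Splitting `M α - B = M (α - α*) + (M α* - B)`, the second term contributes at most `ε₁`,
and the first at most `‖M‖₁ · ‖α - α*‖₁`. Because the blocks partition the columns,
`‖α - α*‖₁` is the sum of the block errors, hence at most `∑ i, ε₂ i`. -/

open Finset

namespace Matrix

variable {ι κ : Type*} [Fintype ι] [Fintype κ]

lemma sum_abs_le_iSup_sum_abs (M : Matrix ι κ ℝ) (j : κ) :
    ∑ i, |M i j| ≤ ⨆ j, ∑ i, |M i j| :=
  le_ciSup (f := fun j => ∑ i, |M i j|) (Set.finite_range _).bddAbove j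

lemma sum_abs_mulVec_le (M : Matrix ι κ ℝ) (v : κ → ℝ) :
    ∑ i, |(M *ᵥ v) i| ≤ (⨆ j, ∑ i, |M i j|) * ∑ j, |v j| :=
  calc ∑ i, |(M *ᵥ v) i|
      ≤ ∑ i, ∑ j, |M i j * v j| := sum_le_sum fun i _ => abs_sum_le_sum_abs _ _
    _ = ∑ j, (∑ i, |M i j|) * |v j| := by
        rw [sum_comm]
        simp only [abs_mul, sum_mul]
    _ ≤ ∑ j, (⨆ j, ∑ i, |M i j|) * |v j| :=
        sum_le_sum fun j _ =>
          mul_le_mul_of_nonneg_right (M.sum_abs_le_iSup_sum_abs j) (abs_nonneg _)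
    _ = (⨆ j, ∑ i, |M i j|) * ∑ j, |v j| := (mul_sum _ _ _).symm

lemma sum_abs_mulVec_sub_le (M : Matrix ι κ ℝ) (B : ι → ℝ) (α αstar : κ → ℝ) :
    ∑ i, |(M *ᵥ α - B) i| ≤
      (⨆ j, ∑ i, |M i j|) * ∑ j, |α j - αstar j| + ∑ i, |(M *ᵥ αstar - B) i| := by
  have hsplit : M *ᵥ α - B = M *ᵥ (α - αstar) + (M *ᵥ αstar - B) := by
    rw [mulVec_sub]
    abel
  calc ∑ i, |(M *ᵥ α - B) i|
      ≤ ∑ i, (|(M *ᵥ (α - αstar)) i| + |(M *ᵥ αstar - B) i|) := by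
        rw [hsplit]
        exact sum_le_sum fun i _ => abs_add_le _ _
    _ ≤ _ := by
        rw [sum_add_distrib]
        exact add_le_add_left (M.sum_abs_mulVec_le (α - αstar)) _

end Matrix

lemma Finset.sum_le_sum_of_partition {ι κ : Type*} [Fintype ι] [Fintype κ] [DecidableEq ι]
    (S : κ → Finset ι) (hdisj : ∀ i j, i ≠ j → Disjoint (S i) (S j))
    (hcover : univ.biUnion S = univ) (f : ι → ℝ) (ε : κ → ℝ)
    (hf : ∀ k, ∑ j ∈ S k, f j ≤ ε k) :
    ∑ j, f j ≤ ∑ k, ε k :=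
  calc ∑ j, f j = ∑ j ∈ univ.biUnion S, f j := by rw [hcover]
    _ = ∑ k, ∑ j ∈ S k, f j := sum_biUnion fun i _ j _ hij => hdisj i j hij
    _ ≤ ∑ k, ε k := sum_le_sum fun k _ => hf k

/-- **Error bound of the compilation process.**
`M` is the real `m × n` matrix governing the global linear equation system,
`B` the target coefficient vector, and the columns `Fin n` are partitioned
into `K` pairwise disjoint blocks `S 1, …, S K` covering all columns.
If `‖M ⬝ α* − B‖₁ ≤ ε₁` and each localized block error satisfies
`∑ j ∈ S i, |α j − α* j| ≤ ε₂ i`, then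
`‖M ⬝ α − B‖₁ ≤ ‖M‖₁ ⋅ (∑ i, ε₂ i) + ε₁`, where `‖M‖₁` is the operator norm
induced by the L1 vector norm, i.e. the maximum absolute column sum. -/
theorem compilation_error_bound
    (m n K : ℕ)
    (M : Matrix (Fin m) (Fin n) ℝ) (B : Fin m → ℝ)
    (S : Fin K → Finset (Fin n))
    (hdisj : ∀ i j : Fin K, i ≠ j → Disjoint (S i) (S j))
    (hcover : Finset.univ.biUnion S = (Finset.univ : Finset (Fin n)))
    (αstar α : Fin n → ℝ) (ε₁ : ℝ) (ε₂ : Fin K → ℝ)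
    (hlin : ∑ i, |(M.mulVec αstar - B) i| ≤ ε₁)
    (hloc : ∀ i : Fin K, ∑ j ∈ S i, |α j - αstar j| ≤ ε₂ i) :
    ∑ i, |(M.mulVec α - B) i| ≤
      (⨆ j : Fin n, ∑ i, |M i j|) * (∑ i, ε₂ i) + ε₁ := by
  have hdist : ∑ j, |α j - αstar j| ≤ ∑ i, ε₂ i :=
    Finset.sum_le_sum_of_partition S hdisj hcover _ ε₂ hloc
  have hnorm : 0 ≤ ⨆ j : Fin n, ∑ i, |M i j| :=
    Real.iSup_nonneg fun j => sum_nonneg fun i _ => abs_nonneg _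
  calc ∑ i, |(M.mulVec α - B) i|
      ≤ (⨆ j : Fin n, ∑ i, |M i j|) * ∑ j, |α j - αstar j| + ∑ i, |(M.mulVec αstar - B) i| :=
        M.sum_abs_mulVec_sub_le B α αstar
    _ ≤ (⨆ j : Fin n, ∑ i, |M i j|) * (∑ i, ε₂ i) + ε₁ :=
        add_le_add (mul_le_mul_of_nonneg_left hdist hnorm) hlin
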